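/- arXiv:1203.5219 — 2 statements merged into one kernel-verified Lean document; each statement's English description precedes it below -/
import Mathlib

section
/- Let f : ℤ → ℂ and define S(N;h) = ∑_{N < n ≤ N+h} f(n). Let t ≥ 0 and H = 2^t. Then for every integer n and every positive integer h ≤ H and every real r ≥ 1, |S(n;h)|^{2r} ≤ (t+1)^{2r-1} · ∑_{0 ≤ d ≤ t} ∑_{0 ≤ v < 2^d} |S(n + v·2^{t-d}; 2^{t-d})|^{2r}. -/
/-!
Write `h < 2 ^ (t + 1)` in binary. Rounding `h` down to multiples of `2 ^ k`, `k = 0, …, t + 1`,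
telescopes `(N, N + h]` into `t + 1` consecutive blocks; the `k`-th block is empty or has length
`2 ^ k` according to the `k`-th bit of `h`, starts at `N` plus a multiple of `2 ^ (k + 1)` and
lies in `(N, N + 2 ^ t]`, so it is one of the `2 ^ (t - k)` dyadic intervals of length `2 ^ k`.
The triangle inequality and the power mean inequality
`(∑_{k ≤ t} x_k) ^ p ≤ (t + 1) ^ (p - 1) ∑_{k ≤ t} x_k ^ p` then give the bound.
-/

open Finset

namespace Nat

lemma div_two_pow_mul_two_pow_eq (h k : ℕ) :
    h / 2 ^ k * 2 ^ k = h / 2 ^ (k + 1) * 2 ^ (k + 1) + h / 2 ^ k % 2 * 2 ^ k := by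
  conv_lhs => rw [← Nat.div_add_mod' (h / 2 ^ k) 2]
  rw [Nat.div_div_eq_div_mul, ← pow_succ, pow_succ 2 k]
  ring

lemma antitone_div_two_pow_mul_two_pow (h : ℕ) : Antitone fun k ↦ h / 2 ^ k * 2 ^ k :=
  antitone_nat_of_succ_le fun k ↦ (div_two_pow_mul_two_pow_eq h k).symm ▸ Nat.le_add_right _ _

end Nat

section IntervalSum

variable {M : Type*} [AddCommMonoid M]

/-- The paper's `S(N; h) = ∑_{N < m ≤ N + h} f m`. -/
noncomputable def intervalSum (f : ℤ → M) (N : ℤ) (h : ℕ) : M :=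
  ∑ m ∈ Ioc N (N + h), f m

lemma intervalSum_zero (f : ℤ → M) (N : ℤ) : intervalSum f N 0 = 0 := by
  simp [intervalSum]

lemma intervalSum_add (f : ℤ → M) (N : ℤ) (a b : ℕ) :
    intervalSum f N (a + b) = intervalSum f N a + intervalSum f (N + a) b := by
  have hN : N ≤ N + a := by omega
  have hNa : N + a ≤ N + a + b := by omega
  rw [intervalSum, intervalSum, intervalSum, ← sum_union (Ioc_disjoint_Ioc_of_le le_rfl),
    Ioc_union_Ioc_eq_Ioc hN hNa, Nat.cast_add, add_assoc]

lemma intervalSum_eq_sum_range_of_antitone (f : ℤ → M) (N : ℤ) {a : ℕ → ℕ} (ha : Antitone a)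
    (K : ℕ) :
    intervalSum f (N + a K) (a 0 - a K) =
      ∑ k ∈ range K, intervalSum f (N + a (k + 1)) (a k - a (k + 1)) := by
  induction K with
  | zero => simp [intervalSum_zero]
  | succ K ih =>
    have hK : a (K + 1) ≤ a K := ha K.le_succ
    have h0 : a K ≤ a 0 := ha K.zero_le
    have split := intervalSum_add f (N + a (K + 1)) (a K - a (K + 1)) (a 0 - a K)
    rw [Nat.cast_sub hK, add_add_sub_cancel, add_comm (a K - _),
      Nat.sub_add_sub_cancel h0 hK] at split
    rw [sum_range_succ, ← ih, split, add_comm]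

lemma intervalSum_eq_sum_binary_blocks (f : ℤ → M) (N : ℤ) {h K : ℕ} (hK : h < 2 ^ K) :
    intervalSum f N h = ∑ k ∈ range K,
      intervalSum f (N + (h / 2 ^ (k + 1) * 2 ^ (k + 1) : ℕ)) (h / 2 ^ k % 2 * 2 ^ k) := by
  have telescope :=
    intervalSum_eq_sum_range_of_antitone f N (Nat.antitone_div_two_pow_mul_two_pow h) K
  simp only [Nat.div_eq_of_lt hK, pow_zero, Nat.div_one, mul_one, zero_mul, Nat.cast_zero,
    add_zero, Nat.sub_zero] at telescope
  rw [telescope]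
  refine sum_congr rfl fun k _ ↦ congrArg _ ?_
  rw [Nat.div_two_pow_mul_two_pow_eq h k, Nat.add_sub_cancel_left]

end IntervalSum

lemma norm_intervalSum_binary_block_rpow_le {E : Type*} [SeminormedAddCommGroup E] (f : ℤ → E)
    (N : ℤ) {h t k : ℕ} (hh : h ≤ 2 ^ t) (hk : k ≤ t) {p : ℝ} (hp : 0 < p) :
    ‖intervalSum f (N + (h / 2 ^ (k + 1) * 2 ^ (k + 1) : ℕ)) (h / 2 ^ k % 2 * 2 ^ k)‖ ^ p ≤
      ∑ v ∈ range (2 ^ (t - k)), ‖intervalSum f (N + (v * 2 ^ k : ℕ)) (2 ^ k)‖ ^ p := by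
  rcases Nat.mod_two_eq_zero_or_one (h / 2 ^ k) with hbit | hbit
  · rw [hbit, zero_mul, intervalSum_zero, norm_zero, Real.zero_rpow hp.ne']
    exact sum_nonneg fun _ _ ↦ by positivity
  set v := 2 * (h / 2 ^ (k + 1))
  have hstart : h / 2 ^ (k + 1) * 2 ^ (k + 1) = v * 2 ^ k := by ring
  have hv : v < 2 ^ (t - k) := by
    have hblock : (v + 1) * 2 ^ k ≤ 2 ^ (t - k) * 2 ^ k :=
      calc (v + 1) * 2 ^ k = h / 2 ^ k * 2 ^ k := by
            rw [Nat.div_two_pow_mul_two_pow_eq h k, hbit, hstart]; ring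
        _ ≤ h := Nat.div_mul_le_self h _
        _ ≤ 2 ^ (t - k) * 2 ^ k := by rwa [← pow_add, Nat.sub_add_cancel hk]
    exact Nat.lt_of_succ_le (Nat.le_of_mul_le_mul_right hblock (by positivity))
  rw [hbit, one_mul, hstart]
  exact single_le_sum (f := fun v ↦ ‖intervalSum f (N + (v * 2 ^ k : ℕ)) (2 ^ k)‖ ^ p)
    (fun _ _ ↦ by positivity) (mem_range.2 hv)

theorem stmt5_general (f : ℤ → ℂ) (t : ℕ) (n : ℤ) (h : ℕ) (hht : h ≤ 2 ^ t)
    (r : ℝ) (hr : 1 ≤ r) :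
    ‖∑ m ∈ Finset.Ioc n (n + (h : ℤ)), f m‖ ^ (2 * r) ≤
      ((t : ℝ) + 1) ^ (2 * r - 1) *
        ∑ d ∈ Finset.range (t + 1), ∑ v ∈ Finset.range (2 ^ d),
          ‖∑ m ∈ Finset.Ioc (n + (v * 2 ^ (t - d) : ℕ))
              (n + (v * 2 ^ (t - d) : ℕ) + (2 ^ (t - d) : ℕ)), f m‖ ^ (2 * r) := by
  set B : ℕ → ℂ := fun k ↦
    intervalSum f (n + (h / 2 ^ (k + 1) * 2 ^ (k + 1) : ℕ)) (h / 2 ^ k % 2 * 2 ^ k)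
  have hp : 1 ≤ 2 * r := by linarith
  calc ‖intervalSum f n h‖ ^ (2 * r)
      = ‖∑ k ∈ range (t + 1), B k‖ ^ (2 * r) := by
        rw [intervalSum_eq_sum_binary_blocks f n (hht.trans_lt (Nat.pow_lt_pow_succ one_lt_two))]
    _ ≤ (∑ k ∈ range (t + 1), ‖B k‖) ^ (2 * r) :=
        Real.rpow_le_rpow (norm_nonneg _) (norm_sum_le _ _) (by linarith)
    _ ≤ ((t : ℝ) + 1) ^ (2 * r - 1) * ∑ k ∈ range (t + 1), ‖B k‖ ^ (2 * r) := by
        simpa using Real.rpow_sum_le_const_mul_sum_rpow_of_nonneg (range (t + 1)) hp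
          fun k _ ↦ norm_nonneg (B k)
    _ ≤ ((t : ℝ) + 1) ^ (2 * r - 1) * ∑ k ∈ range (t + 1), ∑ v ∈ range (2 ^ (t - k)),
          ‖intervalSum f (n + (v * 2 ^ k : ℕ)) (2 ^ k)‖ ^ (2 * r) := by
        gcongr with k hk
        exact norm_intervalSum_binary_block_rpow_le f n hht (Nat.lt_succ_iff.1 (mem_range.1 hk))
          (by linarith)
    _ = _ := by
        -- reindex by `d = t - k`
        rw [← sum_range_reflect]
        refine congrArg _ (sum_congr rfl fun d hd ↦ ?_)
        rw [Nat.add_sub_cancel, Nat.sub_sub_self (Nat.lt_succ_iff.1 (mem_range.1 hd))]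
        rfl

/-- Rademacher–Menchov + Hölder: for any `f : ℤ → ℂ`,
`t ≥ 0`, `H = 2^t`, any integer `n`, positive integer `h ≤ H` and real `r ≥ 1`,
`|S(n;h)|^{2r} ≤ (t+1)^{2r-1} · ∑_{0 ≤ d ≤ t} ∑_{0 ≤ v < 2^d}
  |S(n + v·2^{t-d}; 2^{t-d})|^{2r}`. -/
theorem stmt5 (f : ℤ → ℂ) (t : ℕ) (n : ℤ) (h : ℕ) (hh : 0 < h) (hht : h ≤ 2 ^ t)
    (r : ℝ) (hr : 1 ≤ r) :
    ‖∑ m ∈ Finset.Ioc n (n + (h : ℤ)), f m‖ ^ (2 * r) ≤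
      ((t : ℝ) + 1) ^ (2 * r - 1) *
        ∑ d ∈ Finset.range (t + 1), ∑ v ∈ Finset.range (2 ^ d),
          ‖∑ m ∈ Finset.Ioc (n + (v * 2 ^ (t - d) : ℕ))
              (n + (v * 2 ^ (t - d) : ℕ) + (2 ^ (t - d) : ℕ)), f m‖ ^ (2 * r) :=
  stmt5_general f t n h hht r hr
end

section
/- Let q be a positive integer, f : ℤ → ℂ a q-periodic function, H a positive integer, and H₀ a positive integer with H₀ ≤ H. Define S(N;h) = ∑_{N < n ≤ N+h} f(n) and M(n;K) = max_{1 ≤ h ≤ K} |S(n;h)|. Then for every positive integer r, ∑_{n=1}^{q} M(n;H)^{2r} ≤ (⌈H/H₀⌉+1)^{2r} · ∑_{n=1}^{q} M(n;H₀)^{2r}. -/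
/-!
Write `M(n;K)` for `maxPartialSum f n K`. An interval `(n, n + h]` with `h ≤ H ≤ K H₀` is covered
by the `K` consecutive blocks starting at `n + j H₀`, each of length at most `H₀`, so
`M(n;H) ≤ ∑_{j<K} M(n + j H₀; H₀)`. Raising to the power `p` costs a factor `K^(p-1)`
(power-mean inequality), and summing over a full period of `n` turns each shifted sum
`∑_n M(n + j H₀; H₀)^p` back into `∑_n M(n; H₀)^p`, which produces the remaining factor `K`.
-/
open scoped NNReal
open Finset Function

section PartialSums

variable {E : Type*} [SeminormedAddCommGroup E]

noncomputable def partialSum (f : ℤ → E) (n : ℤ) (h : ℕ) : E :=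
  ∑ m ∈ Ioc n (n + h), f m

noncomputable def maxPartialSum (f : ℤ → E) (n : ℤ) (K : ℕ) : ℝ≥0 :=
  (Icc 1 K).sup fun h => ‖partialSum f n h‖₊

variable (f : ℤ → E)

@[simp]
lemma partialSum_zero (n : ℤ) : partialSum f n 0 = 0 := by
  simp [partialSum]

lemma partialSum_add (n : ℤ) (a b : ℕ) :
    partialSum f n (a + b) = partialSum f n a + partialSum f (n + a) b := by
  have hna : n ≤ n + a := by omega
  have hab : n + a ≤ n + a + b := by omega
  rw [partialSum, partialSum, partialSum, Nat.cast_add, ← add_assoc,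
    ← Ioc_union_Ioc_eq_Ioc hna hab, sum_union (Ioc_disjoint_Ioc_of_le le_rfl)]

lemma partialSum_add_period {q : ℤ} (hf : Periodic f q) (n : ℤ) (h : ℕ) :
    partialSum f (n + q) h = partialSum f n h := by
  rw [partialSum, partialSum, add_right_comm, ← map_add_right_Ioc, sum_map]
  exact sum_congr rfl fun m _ => hf m

lemma nnnorm_partialSum_le_maxPartialSum {n : ℤ} {h K : ℕ} (hhK : h ≤ K) :
    ‖partialSum f n h‖₊ ≤ maxPartialSum f n K := by
  rcases Nat.eq_zero_or_pos h with rfl | hpos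
  · simp
  · exact le_sup (f := fun h => ‖partialSum f n h‖₊) (mem_Icc.2 ⟨hpos, hhK⟩)

lemma maxPartialSum_mono (n : ℤ) : Monotone (maxPartialSum f n) :=
  fun _ _ hK => sup_mono (Icc_subset_Icc_right hK)

lemma maxPartialSum_add_period {q : ℤ} (hf : Periodic f q) (K : ℕ) :
    Periodic (fun n => maxPartialSum f n K) q := fun n => by
  simp only [maxPartialSum, partialSum_add_period f hf]

lemma maxPartialSum_mul_le_sum (n : ℤ) (K H₀ : ℕ) :
    maxPartialSum f n (K * H₀) ≤ ∑ j ∈ range K, maxPartialSum f (n + ↑(j * H₀)) H₀ := by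
  induction K with
  | zero => simp [maxPartialSum]
  | succ K ih =>
    refine Finset.sup_le fun h hh => ?_
    rw [sum_range_succ]
    rcases le_or_gt h (K * H₀) with hle | hlt
    · calc ‖partialSum f n h‖₊ ≤ maxPartialSum f n (K * H₀) :=
            nnnorm_partialSum_le_maxPartialSum f hle
        _ ≤ _ := ih.trans le_self_add
    · obtain ⟨b, rfl⟩ := Nat.exists_eq_add_of_le hlt.le
      have hb : b ≤ H₀ := by have := (mem_Icc.1 hh).2; rw [Nat.succ_mul] at this; omega
      calc ‖partialSum f n (K * H₀ + b)‖₊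
          ≤ ‖partialSum f n (K * H₀)‖₊ + ‖partialSum f (n + ↑(K * H₀)) b‖₊ := by
            rw [partialSum_add]; exact nnnorm_add_le _ _
        _ ≤ _ := add_le_add ((nnnorm_partialSum_le_maxPartialSum f le_rfl).trans ih)
            (nnnorm_partialSum_le_maxPartialSum f hb)

end PartialSums

lemma Function.Periodic.sum_range_add {M : Type*} [AddCancelCommMonoid M] {g : ℤ → M} {q : ℕ}
    (hg : Periodic g q) (a : ℤ) : ∑ i ∈ range q, g (a + i) = ∑ i ∈ range q, g i := by
  have step : ∀ a : ℤ, ∑ i ∈ range q, g (a + 1 + i) = ∑ i ∈ range q, g (a + i) := fun a => by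
    have h := sum_range_succ' (fun i : ℕ => g (a + i)) q
    rw [sum_range_succ, Nat.cast_zero, add_zero, hg a] at h
    simpa only [Nat.cast_succ, add_assoc, add_comm (1 : ℤ)] using (add_right_cancel h).symm
  induction a using Int.induction_on with
  | zero => simp
  | succ a ih => rw [step, ih]
  | pred a ih => rw [← ih, ← step, sub_add_cancel]

lemma Function.Periodic.sum_Icc_add {M : Type*} [AddCancelCommMonoid M] {g : ℤ → M} {q : ℕ}
    (hg : Periodic g q) (c : ℤ) : ∑ n ∈ Icc 1 q, g (n + c) = ∑ n ∈ Icc 1 q, g n := by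
  have h : ∀ c : ℤ, ∑ n ∈ Icc 1 q, g (n + c) = ∑ i ∈ range q, g (c + 1 + i) := fun c => by
    rw [← Ico_add_one_right_eq_Icc, sum_Ico_eq_sum_range, Nat.add_sub_cancel]
    exact sum_congr rfl fun i _ => by push_cast; ring_nf
  rw [h, hg.sum_range_add, ← hg.sum_range_add (0 + 1), ← h]
  simp only [add_zero]

lemma sum_maxPartialSum_pow_le {E : Type*} [SeminormedAddCommGroup E] {f : ℤ → E} {q : ℕ}
    (hf : Periodic f q) {H H₀ K : ℕ} (hHK : H ≤ K * H₀) (p : ℕ) :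
    ∑ n ∈ Icc 1 q, (maxPartialSum f n H : ℝ) ^ (p + 1) ≤
      (K : ℝ) ^ (p + 1) * ∑ n ∈ Icc 1 q, (maxPartialSum f n H₀ : ℝ) ^ (p + 1) := by
  have pointwise (n : ℤ) : (maxPartialSum f n H : ℝ) ^ (p + 1) ≤
      (K : ℝ) ^ p * ∑ j ∈ range K, (maxPartialSum f (n + ↑(j * H₀)) H₀ : ℝ) ^ (p + 1) :=
    calc (maxPartialSum f n H : ℝ) ^ (p + 1)
        ≤ (∑ j ∈ range K, (maxPartialSum f (n + ↑(j * H₀)) H₀ : ℝ)) ^ (p + 1) := by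
          gcongr
          exact_mod_cast (maxPartialSum_mono f n hHK).trans (maxPartialSum_mul_le_sum f n K H₀)
      _ ≤ _ := by
          simpa only [card_range] using
            pow_sum_le_card_mul_sum_pow (s := range K) (fun j _ => NNReal.coe_nonneg _) p
  have shift (c : ℤ) : ∑ n ∈ Icc 1 q, (maxPartialSum f (n + c) H₀ : ℝ) ^ (p + 1) =
      ∑ n ∈ Icc 1 q, (maxPartialSum f n H₀ : ℝ) ^ (p + 1) :=
    ((maxPartialSum_add_period f hf H₀).comp fun x : ℝ≥0 => (x : ℝ) ^ (p + 1)).sum_Icc_add c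
  calc ∑ n ∈ Icc 1 q, (maxPartialSum f n H : ℝ) ^ (p + 1)
      ≤ ∑ n ∈ Icc 1 q, (K : ℝ) ^ p *
          ∑ j ∈ range K, (maxPartialSum f (n + ↑(j * H₀)) H₀ : ℝ) ^ (p + 1) :=
        sum_le_sum fun n _ => pointwise n
    _ = (K : ℝ) ^ p *
          ∑ j ∈ range K, ∑ n ∈ Icc 1 q, (maxPartialSum f (n + ↑(j * H₀)) H₀ : ℝ) ^ (p + 1) := by
        rw [← mul_sum, sum_comm]
    _ = (K : ℝ) ^ (p + 1) * ∑ n ∈ Icc 1 q, (maxPartialSum f n H₀ : ℝ) ^ (p + 1) := by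
        rw [sum_congr rfl fun j _ => shift _, sum_const, card_range, nsmul_eq_mul, pow_succ,
          mul_assoc]

theorem stmt6_general (q : ℕ) (f : ℤ → ℂ)
    (hper : ∀ n : ℤ, f (n + q) = f n)
    (H H₀ : ℕ) (hH₀ : 0 < H₀) (r : ℕ) (hr : 0 < r) :
    ∑ n ∈ Finset.Icc 1 q,
        ((((Finset.Icc 1 H).sup
          (fun h => ‖∑ m ∈ Finset.Ioc (n : ℤ) ((n : ℤ) + h), f m‖₊) : ℝ≥0) : ℝ)) ^ (2 * r) ≤
      ((⌈(H : ℝ) / H₀⌉₊ + 1 : ℝ)) ^ (2 * r) *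
        ∑ n ∈ Finset.Icc 1 q,
          ((((Finset.Icc 1 H₀).sup
            (fun h => ‖∑ m ∈ Finset.Ioc (n : ℤ) ((n : ℤ) + h), f m‖₊) : ℝ≥0) : ℝ)) ^ (2 * r) := by
  have hcover : H ≤ (⌈(H : ℝ) / H₀⌉₊ + 1) * H₀ := by
    have h := Nat.le_ceil ((H : ℝ) / H₀)
    rw [div_le_iff₀ (by exact_mod_cast hH₀)] at h
    have : (H : ℝ) ≤ ((⌈(H : ℝ) / H₀⌉₊ + 1) * H₀ : ℕ) := by push_cast; nlinarith
    exact_mod_cast this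
  obtain ⟨p, hp⟩ := Nat.exists_eq_add_one_of_ne_zero (by omega : 2 * r ≠ 0)
  rw [hp]
  exact_mod_cast sum_maxPartialSum_pow_le hper hcover p

/-- for `f : ℤ → ℂ` `q`-periodic, `0 < H₀ ≤ H`, and
`M(n;K) = max_{1 ≤ h ≤ K} |S(n;h)|`, one has for every positive integer `r`:
`∑_{n=1}^q M(n;H)^{2r} ≤ (⌈H/H₀⌉+1)^{2r} · ∑_{n=1}^q M(n;H₀)^{2r}`. -/
theorem stmt6 (q : ℕ) (hq : 0 < q) (f : ℤ → ℂ)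
    (hper : ∀ n : ℤ, f (n + q) = f n)
    (H H₀ : ℕ) (hH₀ : 0 < H₀) (hH₀H : H₀ ≤ H) (r : ℕ) (hr : 0 < r) :
    ∑ n ∈ Finset.Icc 1 q,
        ((((Finset.Icc 1 H).sup
          (fun h => ‖∑ m ∈ Finset.Ioc (n : ℤ) ((n : ℤ) + h), f m‖₊) : ℝ≥0) : ℝ)) ^ (2 * r) ≤
      ((⌈(H : ℝ) / H₀⌉₊ + 1 : ℝ)) ^ (2 * r) *
        ∑ n ∈ Finset.Icc 1 q,
          ((((Finset.Icc 1 H₀).sup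
            (fun h => ‖∑ m ∈ Finset.Ioc (n : ℤ) ((n : ℤ) + h), f m‖₊) : ℝ≥0) : ℝ)) ^ (2 * r) :=
  stmt6_general q f hper H H₀ hH₀ r hr
end
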